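/- arXiv:2312.04023 — 3 statements merged into one kernel-verified Lean document; each statement's English description precedes it below -/
import Mathlib

section
/- Let Ψ ∈ M_{d×N}(ℂ) and Ψ⁺ its Moore–Penrose pseudoinverse. If W_1, …, W_L ∈ M_N(ℂ) are positive semidefinite with Σ_i W_i = Ψ*Ψ, then the matrices M_i := (Ψ⁺)* W_i Ψ⁺ + (1/L)(1_d − ΨΨ⁺) are positive semidefinite and satisfy Σ_{i=1}^L M_i = 1_d. -/
open Matrix ComplexOrder

/-! `Π := ΨΨ⁺` is an orthogonal projection, so both `Π` and `1 − Π` are positive semidefinite,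
and `Pᴴ (ΨᴴΨ) P = (ΨP)ᴴ (ΨP) = Π`. Hence each `Mᵢ` is a sum of two positive semidefinite
matrices, and summing over `i` gives `Π + L • (1/L)(1 − Π) = 1`. -/

namespace Matrix

variable {m n R : Type*} [Fintype m] [Fintype n]

theorem isStarProjection_mul_of_mul_mul_eq [Semiring R] [StarRing R]
    {A : Matrix m n R} {B : Matrix n m R} (hABA : A * B * A = A) (hAB : (A * B)ᴴ = A * B) :
    IsStarProjection (A * B) where
  isIdempotentElem := by rw [IsIdempotentElem, ← Matrix.mul_assoc, hABA]
  isSelfAdjoint := hAB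

theorem conjTranspose_mul_gram_mul_eq_of_mul_mul_eq [CommSemiring R] [StarRing R]
    {A : Matrix m n R} {B : Matrix n m R} (hABA : A * B * A = A) (hAB : (A * B)ᴴ = A * B) :
    Bᴴ * (Aᴴ * A) * B = A * B := by
  calc Bᴴ * (Aᴴ * A) * B = (A * B)ᴴ * (A * B) := by
        simp only [conjTranspose_mul, Matrix.mul_assoc]
    _ = A * B := by rw [hAB, ← Matrix.mul_assoc, hABA]

section MatrixOrder

open scoped MatrixOrder

theorem posSemidef_of_isStarProjection {𝕜 : Type*} [RCLike 𝕜] {A : Matrix m m 𝕜}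
    (hA : IsStarProjection A) : A.PosSemidef :=
  hA.nonneg.posSemidef

end MatrixOrder

end Matrix

theorem Finset.sum_fin_one_div_smul {K E : Type*} [DivisionSemiring K] [CharZero K]
    [AddCommMonoid E] [Module K E] {L : ℕ} (hL : L ≠ 0) (x : E) :
    ∑ _i : Fin L, ((1 : K) / L) • x = x := by
  rw [Finset.sum_const, Finset.card_univ, Fintype.card_fin, ← Nat.cast_smul_eq_nsmul K, smul_smul,
    mul_one_div_cancel (Nat.cast_ne_zero.mpr hL), one_smul]

theorem reconstructed_povm_general {d N L : ℕ} (hL : 1 ≤ L)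
    (Ψ : Matrix (Fin d) (Fin N) ℂ) (P : Matrix (Fin N) (Fin d) ℂ)
    (h1 : Ψ * P * Ψ = Ψ)
    (h3 : (Ψ * P)ᴴ = Ψ * P)
    (W : Fin L → Matrix (Fin N) (Fin N) ℂ)
    (hW : ∀ i, (W i).PosSemidef) (hsum : ∑ i, W i = Ψᴴ * Ψ)
    (M : Fin L → Matrix (Fin d) (Fin d) ℂ)
    (hM : ∀ i, M i = Pᴴ * W i * P + ((1 : ℂ) / L) • (1 - Ψ * P)) :
    (∀ i, (M i).PosSemidef) ∧ ∑ i, M i = 1 := by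
  have hproj := isStarProjection_mul_of_mul_mul_eq h1 h3
  refine ⟨fun i => ?_, ?_⟩
  · rw [hM i]
    exact ((hW i).conjTranspose_mul_mul_same P).add
      ((posSemidef_of_isStarProjection hproj.one_sub).smul (by positivity))
  · rw [Finset.sum_congr rfl fun i _ => hM i, Finset.sum_add_distrib, ← Matrix.sum_mul,
      ← Matrix.mul_sum, hsum, conjTranspose_mul_gram_mul_eq_of_mul_mul_eq h1 h3,
      Finset.sum_fin_one_div_smul (Nat.one_le_iff_ne_zero.mp hL), add_sub_cancel]

/-- If `P = Ψ⁺` is the Moore–Penrose pseudoinverse of `Ψ` (characterized by the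
four Penrose equations), and `W₁, …, W_L ⪰ 0` sum to `ΨᴴΨ`, then the matrices
`Mᵢ = Pᴴ Wᵢ P + (1/L)(1 − ΨP)` are positive semidefinite and sum to the identity. -/
theorem reconstructed_povm {d N L : ℕ} (hL : 1 ≤ L)
    (Ψ : Matrix (Fin d) (Fin N) ℂ) (P : Matrix (Fin N) (Fin d) ℂ)
    (h1 : Ψ * P * Ψ = Ψ) (h2 : P * Ψ * P = P)
    (h3 : (Ψ * P)ᴴ = Ψ * P) (h4 : (P * Ψ)ᴴ = P * Ψ)
    (W : Fin L → Matrix (Fin N) (Fin N) ℂ)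
    (hW : ∀ i, (W i).PosSemidef) (hsum : ∑ i, W i = Ψᴴ * Ψ)
    (M : Fin L → Matrix (Fin d) (Fin d) ℂ)
    (hM : ∀ i, M i = Pᴴ * W i * P + ((1 : ℂ) / L) • (1 - Ψ * P)) :
    (∀ i, (M i).PosSemidef) ∧ ∑ i, M i = 1 :=
  reconstructed_povm_general hL Ψ P h1 h3 W hW hsum M hM
end

section
/- With M_i := (Ψ⁺)* W_i Ψ⁺ + (1/L)(1_d − ΨΨ⁺) constructed from positive semidefinite W_1, …, W_L summing to Ψ*Ψ, one has ⟨ψ_j| M_i |ψ_j⟩ = ⟨j| W_i |j⟩ for all i ∈ [L] and j ∈ [N], where |ψ_j⟩ = Ψ|j⟩. -/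
/-!
Every `Wᵢ` annihilates `ker Ψ`: for `Ψ x = 0`, the nonnegative numbers `x⋆ Wᵢ x` sum to
`‖Ψ x‖² = 0`. Since `1 - Ψ⁺Ψ` maps into `ker Ψ`, this gives `Wᵢ Ψ⁺Ψ = Wᵢ`, and hence
`(Ψ⁺Ψ)ᴴ Wᵢ (Ψ⁺Ψ) = Wᵢ`. The correction term `1 - ΨΨ⁺` is invisible on the range of `Ψ`, so
`Ψᴴ Mᵢ Ψ = Wᵢ`, whose diagonal entries are the claimed identities.
-/

open Matrix ComplexOrder

namespace Matrix

variable {n m ι 𝕜 : Type*} [Fintype n] [RCLike 𝕜]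

open scoped MatrixOrder Matrix.Norms.L2Operator in
theorem PosSemidef.mul_eq_zero_of_conjTranspose_mul_mul_eq_zero [Fintype m]
    {A : Matrix n n 𝕜} (hA : A.PosSemidef) {B : Matrix n m 𝕜} (h : Bᴴ * A * B = 0) :
    A * B = 0 := by
  classical
  obtain ⟨C, rfl⟩ := CStarAlgebra.nonneg_iff_eq_star_mul_self.mp hA.nonneg
  rw [star_eq_conjTranspose, conjTranspose_mul_self_mul_eq_zero,
    ← conjTranspose_mul_self_eq_zero]
  simpa only [conjTranspose_mul, star_eq_conjTranspose, Matrix.mul_assoc] using h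

open scoped MatrixOrder in
theorem PosSemidef.mul_eq_zero_of_sum_mul_eq_zero [Fintype m] {s : Finset ι}
    {A : ι → Matrix n n 𝕜} (hA : ∀ i ∈ s, (A i).PosSemidef) {B : Matrix n m 𝕜}
    (h : (∑ i ∈ s, A i) * B = 0) {i : ι} (hi : i ∈ s) : A i * B = 0 := by
  have hsum : ∑ i ∈ s, Bᴴ * A i * B = 0 := by
    rw [← Matrix.sum_mul, ← Matrix.mul_sum, Matrix.mul_assoc, h, Matrix.mul_zero]
  have hnonneg : ∀ j ∈ s, 0 ≤ Bᴴ * A j * B := fun j hj =>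
    ((hA j hj).conjTranspose_mul_mul_same B).nonneg
  exact (hA i hi).mul_eq_zero_of_conjTranspose_mul_mul_eq_zero
    ((Finset.sum_eq_zero_iff_of_nonneg hnonneg).mp hsum i hi)

theorem IsHermitian.conjTranspose_mul_mul_eq_self {A E : Matrix n n 𝕜} (hA : A.IsHermitian)
    (h : A * E = A) : Eᴴ * A * E = A := by
  have h' : Eᴴ * A = A := by rw [← hA.eq, ← conjTranspose_mul, h]
  rw [h', h]

theorem star_mulVec_dotProduct_mulVec_mulVec [Fintype m] (A : Matrix n m 𝕜)
    (B : Matrix n n 𝕜) (x : m → 𝕜) :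
    star (A *ᵥ x) ⬝ᵥ (B *ᵥ (A *ᵥ x)) = star x ⬝ᵥ ((Aᴴ * B * A) *ᵥ x) := by
  rw [star_mulVec, ← dotProduct_mulVec, mulVec_mulVec, mulVec_mulVec, Matrix.mul_assoc]

theorem star_single_dotProduct_mulVec_single [DecidableEq n] (A : Matrix n n 𝕜) (j : n) :
    star (Pi.single j 1 : n → 𝕜) ⬝ᵥ (A *ᵥ Pi.single j 1) = A j j := by
  simp [mulVec_single]

end Matrix

theorem reconstructed_povm_probabilities_general {d N L : ℕ}
    (Ψ : Matrix (Fin d) (Fin N) ℂ) (P : Matrix (Fin N) (Fin d) ℂ)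
    (h1 : Ψ * P * Ψ = Ψ)
    (W : Fin L → Matrix (Fin N) (Fin N) ℂ)
    (hW : ∀ i, (W i).PosSemidef) (hsum : ∑ i, W i = Ψᴴ * Ψ)
    (M : Fin L → Matrix (Fin d) (Fin d) ℂ)
    (hM : ∀ i, M i = Pᴴ * W i * P + ((1 : ℂ) / L) • (1 - Ψ * P)) :
    ∀ (i : Fin L) (j : Fin N),
      dotProduct (star (Ψ *ᵥ Pi.single j 1)) ((M i) *ᵥ (Ψ *ᵥ Pi.single j 1))
        = (W i) j j := by
  intro i j
  have hΨ_kills : Ψ * (1 - P * Ψ) = 0 := by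
    rw [Matrix.mul_sub, Matrix.mul_one, ← Matrix.mul_assoc, h1, sub_self]
  have hW_kills : W i * (1 - P * Ψ) = 0 :=
    PosSemidef.mul_eq_zero_of_sum_mul_eq_zero (fun i _ => hW i)
      (by rw [hsum, Matrix.mul_assoc, hΨ_kills, Matrix.mul_zero]) (Finset.mem_univ i)
  have hW_proj : W i * (P * Ψ) = W i := by
    rwa [Matrix.mul_sub, Matrix.mul_one, sub_eq_zero, eq_comm] at hW_kills
  have hcorrection : Ψᴴ * (1 - Ψ * P) * Ψ = 0 := by
    rw [Matrix.mul_sub, Matrix.mul_one, Matrix.sub_mul, Matrix.mul_assoc Ψᴴ, h1, sub_self]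
  have hcompress : Ψᴴ * M i * Ψ = W i := calc
    Ψᴴ * M i * Ψ = (P * Ψ)ᴴ * W i * (P * Ψ) + ((1 : ℂ) / L) • (Ψᴴ * (1 - Ψ * P) * Ψ) := by
      rw [hM i, conjTranspose_mul, Matrix.mul_add, Matrix.add_mul, Matrix.mul_smul,
        Matrix.smul_mul]
      simp only [Matrix.mul_assoc]
    _ = W i := by
      rw [hcorrection, smul_zero, add_zero,
        (hW i).isHermitian.conjTranspose_mul_mul_eq_self hW_proj]
  rw [star_mulVec_dotProduct_mulVec_mulVec, hcompress, star_single_dotProduct_mulVec_single]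

/-- With `Mᵢ = (Ψ⁺)ᴴ Wᵢ Ψ⁺ + (1/L)(1 − ΨΨ⁺)` constructed from positive
semidefinite `W₁, …, W_L` summing to `ΨᴴΨ`, one has `⟨ψⱼ|Mᵢ|ψⱼ⟩ = ⟨j|Wᵢ|j⟩`
for all `i, j`, where `|ψⱼ⟩ = Ψ|j⟩`. -/
theorem reconstructed_povm_probabilities {d N L : ℕ} (hL : 1 ≤ L)
    (Ψ : Matrix (Fin d) (Fin N) ℂ) (P : Matrix (Fin N) (Fin d) ℂ)
    (h1 : Ψ * P * Ψ = Ψ) (h2 : P * Ψ * P = P)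
    (h3 : (Ψ * P)ᴴ = Ψ * P) (h4 : (P * Ψ)ᴴ = P * Ψ)
    (W : Fin L → Matrix (Fin N) (Fin N) ℂ)
    (hW : ∀ i, (W i).PosSemidef) (hsum : ∑ i, W i = Ψᴴ * Ψ)
    (M : Fin L → Matrix (Fin d) (Fin d) ℂ)
    (hM : ∀ i, M i = Pᴴ * W i * P + ((1 : ℂ) / L) • (1 - Ψ * P)) :
    ∀ (i : Fin L) (j : Fin N),
      dotProduct (star (Ψ *ᵥ Pi.single j 1)) ((M i) *ᵥ (Ψ *ᵥ Pi.single j 1))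
        = (W i) j j :=
  reconstructed_povm_probabilities_general Ψ P h1 W hW hsum M hM
end

section
/- The maximal reward of the generalized pure-state discrimination SDP equals the maximal reward of its Gram-matrix reduction: sup over POVMs {M_i}_{i=1}^L on ℂ^d of Σ_{i,j} R_{ij} q_j ⟨ψ_j|M_i|ψ_j⟩ equals sup over families {W_i}_{i=1}^L of PSD N×N matrices with Σ_i W_i = G of Σ_{i,j} R_{ij} q_j ⟨j|W_i|j⟩. -/
/-!
Every admissible family of the reduced problem comes from a POVM. Write `V` for the `d × N`
matrix whose columns are the `ψ j`, so that `G = Vᴴ V` and `⟨ψ j| M |ψ j⟩ = (Vᴴ M V) j j`; a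
POVM `M` therefore yields the feasible family `W i = Vᴴ M i V` with the same reward. Conversely,
since `0 ≤ W i ≤ G`, each `W i` lives on the range of `G`, so with a pseudo-inverse `B` of `G`
the matrices `M i = (V B) W i (V B)ᴴ`, with the projection `1 - V B Vᴴ` onto the orthogonal
complement of the span of the `ψ j` added to one of them, form a POVM with `Vᴴ M i V = W i`.
-/

open Matrix ComplexOrder
open scoped MatrixOrder

theorem IsSelfAdjoint.exists_pseudoinverse {A : Type*} [Ring A] [StarRing A] [Algebra ℝ A]
    [TopologicalSpace A] [ContinuousFunctionalCalculus ℝ A IsSelfAdjoint] {a : A}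
    (ha : IsSelfAdjoint a) (hfin : (spectrum ℝ a).Finite) :
    ∃ b, IsSelfAdjoint b ∧ a * b * a = a ∧ b * a * b = b := by
  have cfc_mul' (f g : ℝ → ℝ) : cfc f a * cfc g a = cfc (fun x ↦ f x * g x) a :=
    (cfc_mul f g a (hfin.continuousOn _) (hfin.continuousOn _)).symm
  have ha_eq : a = cfc (fun x : ℝ ↦ x) a := (cfc_id' ℝ a).symm
  -- Thanks to `0⁻¹ = 0`, the function `x ↦ x⁻¹` is a pseudo-inverse on all of `ℝ`.
  set b := cfc (·⁻¹ : ℝ → ℝ) a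
  refine ⟨b, cfc_predicate _ a, ?_, ?_⟩
  · calc a * b * a = cfc (fun x : ℝ ↦ x) a * b * cfc (fun x : ℝ ↦ x) a := by rw [← ha_eq]
      _ = cfc (fun x : ℝ ↦ x * x⁻¹ * x) a := by rw [cfc_mul', cfc_mul']
      _ = a := by simp only [mul_inv_mul_cancel, ← ha_eq]
  · calc b * a * b = b * cfc (fun x : ℝ ↦ x) a * b := by rw [← ha_eq]
      _ = cfc (fun x : ℝ ↦ x⁻¹ * x * x⁻¹) a := by rw [cfc_mul', cfc_mul']
      _ = b := congrArg (cfc · a) (funext fun x ↦ by simpa using mul_inv_mul_cancel x⁻¹)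

namespace Matrix

theorem conjTranspose_mul_mul_apply {α m n : Type*} [NonUnitalSemiring α] [Star α] [Fintype m]
    (V : Matrix m n α) (A : Matrix m m α) (i j : n) :
    (Vᴴ * A * V) i j = star (fun k ↦ V k i) ⬝ᵥ A *ᵥ fun k ↦ V k j := by
  rw [Matrix.mul_assoc]
  simp only [mul_apply, dotProduct, mulVec, conjTranspose_apply, Pi.star_apply]

variable {𝕜 : Type*} [RCLike 𝕜] {m n : Type*} [Fintype m] [Fintype n]

theorem mul_eq_zero_of_nonneg_of_le {W G X : Matrix n n 𝕜} (hW : 0 ≤ W) (hWG : W ≤ G)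
    (hGX : G * X = 0) : W * X = 0 := by
  classical
  have hXWX : star X * W * X = 0 := le_antisymm
    (by simpa [Matrix.mul_assoc, hGX] using star_left_conjugate_le_conjugate hWG X)
    (star_left_conjugate_nonneg hW X)
  obtain ⟨S, rfl⟩ := CStarAlgebra.nonneg_iff_eq_star_mul_self.mp hW
  have hSX : S * X = 0 := by
    rw [← conjTranspose_mul_self_eq_zero]
    simpa [Matrix.mul_assoc, star_eq_conjTranspose] using hXWX
  rw [Matrix.mul_assoc, hSX, Matrix.mul_zero]

theorem conj_eq_self_of_nonneg_of_le {W G B : Matrix n n 𝕜} (hW : 0 ≤ W) (hWG : W ≤ G)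
    (hG : G.IsHermitian) (hB : B.IsHermitian) (hGBG : G * B * G = G) :
    G * B * W * (B * G) = W := by
  classical
  have hW_mul : W * (B * G) = W := by
    have hG_ker : G * (1 - B * G) = 0 := by
      rw [Matrix.mul_sub, Matrix.mul_one, ← Matrix.mul_assoc, hGBG, sub_self]
    have := mul_eq_zero_of_nonneg_of_le hW hWG hG_ker
    rwa [Matrix.mul_sub, Matrix.mul_one, sub_eq_zero, eq_comm] at this
  have hmul_W : G * B * W = W := by
    simpa [hB.eq, hW.posSemidef.isHermitian.eq, hG.eq, Matrix.mul_assoc]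
      using congrArg conjTranspose hW_mul
  rw [hmul_W, hW_mul]

theorem isStarProjection_mul_mul_conjTranspose (V : Matrix m n 𝕜) {B : Matrix n n 𝕜}
    (hB : B.IsHermitian) (hBGB : B * (Vᴴ * V) * B = B) : IsStarProjection (V * B * Vᴴ) := by
  refine ⟨?_, ?_⟩
  · calc V * B * Vᴴ * (V * B * Vᴴ) = V * (B * (Vᴴ * V) * B) * Vᴴ := by
          simp only [Matrix.mul_assoc]
      _ = V * B * Vᴴ := by rw [hBGB]
  · simp only [IsSelfAdjoint, star_eq_conjTranspose, conjTranspose_mul, hB.eq,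
      conjTranspose_conjTranspose, Matrix.mul_assoc]

theorem exists_posSemidef_sum_eq_one_of_sum_eq_gram [DecidableEq m] [DecidableEq n]
    {ι : Type*} [Fintype ι] [DecidableEq ι] (i₀ : ι) (V : Matrix m n 𝕜)
    {W : ι → Matrix n n 𝕜} (hW : ∀ i, (W i).PosSemidef) (hsum : ∑ i, W i = Vᴴ * V) :
    ∃ M : ι → Matrix m m 𝕜, (∀ i, (M i).PosSemidef) ∧ ∑ i, M i = 1 ∧
      ∀ i, Vᴴ * M i * V = W i := by
  have hG : (Vᴴ * V).IsHermitian := (posSemidef_conjTranspose_mul_self V).isHermitian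
  obtain ⟨B, hB, hGBG, hBGB⟩ := hG.isSelfAdjoint.exists_pseudoinverse finite_real_spectrum
  replace hB : B.IsHermitian := hB
  have hP := isStarProjection_mul_mul_conjTranspose V hB hBGB
  set G := Vᴴ * V
  have hle (i : ι) : W i ≤ G :=
    hsum ▸ Finset.single_le_sum (fun k _ ↦ (hW k).nonneg) (Finset.mem_univ i)
  set X := V * B
  have hXGX : X * G * Xᴴ = V * (B * G * B) * Vᴴ := by
    simp only [X, conjTranspose_mul, hB.eq, Matrix.mul_assoc]
  set P := X * Vᴴ
  have hVPV : Vᴴ * (1 - P) * V = 0 := by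
    calc Vᴴ * (1 - P) * V = G - G * B * G := by
          simp only [P, X, G, Matrix.mul_sub, Matrix.sub_mul, Matrix.mul_one, Matrix.mul_assoc]
      _ = 0 := by rw [hGBG, sub_self]
  have hconj (i : ι) : Vᴴ * (X * W i * Xᴴ) * V = W i := by
    calc Vᴴ * (X * W i * Xᴴ) * V = G * B * W i * (B * G) := by
          simp only [X, G, conjTranspose_mul, hB.eq, Matrix.mul_assoc]
      _ = W i := conj_eq_self_of_nonneg_of_le (hW i).nonneg (hle i) hG hB hGBG
  refine ⟨fun i ↦ X * W i * Xᴴ + (Pi.single i₀ (1 - P) : ι → Matrix m m 𝕜) i,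
    fun i ↦ ?_, ?_, fun i ↦ ?_⟩
  · refine ((hW i).mul_mul_conjTranspose_same X).add ?_
    rcases eq_or_ne i i₀ with rfl | h
    · simpa using hP.one_sub_nonneg.posSemidef
    · simpa [h] using PosSemidef.zero
  · rw [Finset.sum_add_distrib, ← Matrix.sum_mul, ← Matrix.mul_sum, hsum, hXGX, hBGB,
      Finset.sum_pi_single', if_pos (Finset.mem_univ i₀), add_sub_cancel]
  · rw [Matrix.mul_add, Matrix.add_mul, hconj]
    rcases eq_or_ne i i₀ with rfl | h
    · simp [hVPV]
    · simp [h]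

end Matrix

theorem sdp_reward_reduction_general {d N L : ℕ} (ψ : Fin N → (Fin d → ℂ))
    (R : Fin L → Fin N → ℝ) (q : Fin N → ℝ)
    (G : Matrix (Fin N) (Fin N) ℂ)
    (hG : G = Matrix.of fun i j => dotProduct (star (ψ i)) (ψ j)) :
    sSup {x : ℝ | ∃ M : Fin L → Matrix (Fin d) (Fin d) ℂ,
        (∀ i, (M i).PosSemidef) ∧ (∑ i, M i = 1) ∧
        x = ∑ i, ∑ j, R i j * q j *
          (dotProduct (star (ψ j)) ((M i) *ᵥ ψ j)).re}
      = sSup {x : ℝ | ∃ W : Fin L → Matrix (Fin N) (Fin N) ℂ,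
        (∀ i, (W i).PosSemidef) ∧ (∑ i, W i = G) ∧
        x = ∑ i, ∑ j, R i j * q j * ((W i) j j).re} := by
  rcases isEmpty_or_nonempty (Fin L) with hL | ⟨⟨i₀⟩⟩
  · have sSup_eq_zero (S : Set ℝ) (hS : S ⊆ {0}) : sSup S = 0 :=
      le_antisymm (Real.sSup_nonpos fun x hx ↦ (hS hx).le)
        (Real.sSup_nonneg fun x hx ↦ (hS hx).ge)
    rw [sSup_eq_zero _ ?_, sSup_eq_zero _ ?_] <;> rintro x ⟨_, -, -, rfl⟩ <;> simp
  set V : Matrix (Fin d) (Fin N) ℂ := (Matrix.of ψ)ᵀ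
  have hdiag (A : Matrix (Fin d) (Fin d) ℂ) (j : Fin N) :
      (Vᴴ * A * V) j j = star (ψ j) ⬝ᵥ A *ᵥ ψ j :=
    conjTranspose_mul_mul_apply V A j j
  have hGV : G = Vᴴ * V := by
    ext i j
    rw [hG, ← Matrix.mul_one Vᴴ, conjTranspose_mul_mul_apply, one_mulVec]
    rfl
  congr 1
  ext x
  constructor
  · rintro ⟨M, hM, hsum, rfl⟩
    refine ⟨fun i ↦ Vᴴ * M i * V, fun i ↦ (hM i).conjTranspose_mul_mul_same V, ?_,
      by simp only [hdiag]⟩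
    rw [← Matrix.sum_mul, ← Matrix.mul_sum, hsum, Matrix.mul_one, hGV]
  · rintro ⟨W, hW, hsum, rfl⟩
    obtain ⟨M, hM, hsumM, hVMV⟩ :=
      exists_posSemidef_sum_eq_one_of_sum_eq_gram i₀ V hW (hsum.trans hGV)
    exact ⟨M, hM, hsumM, by simp only [← hVMV, hdiag]⟩

/-- The maximal reward of the generalized pure-state discrimination SDP equals
the maximal reward of its Gram-matrix reduction. -/
theorem sdp_reward_reduction {d N L : ℕ} (ψ : Fin N → (Fin d → ℂ))
    (R : Fin L → Fin N → ℝ) (q : Fin N → ℝ) (hq : ∀ j, 0 ≤ q j)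
    (G : Matrix (Fin N) (Fin N) ℂ)
    (hG : G = Matrix.of fun i j => dotProduct (star (ψ i)) (ψ j)) :
    sSup {x : ℝ | ∃ M : Fin L → Matrix (Fin d) (Fin d) ℂ,
        (∀ i, (M i).PosSemidef) ∧ (∑ i, M i = 1) ∧
        x = ∑ i, ∑ j, R i j * q j *
          (dotProduct (star (ψ j)) ((M i) *ᵥ ψ j)).re}
      = sSup {x : ℝ | ∃ W : Fin L → Matrix (Fin N) (Fin N) ℂ,
        (∀ i, (W i).PosSemidef) ∧ (∑ i, W i = G) ∧
        x = ∑ i, ∑ j, R i j * q j * ((W i) j j).re} :=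
  sdp_reward_reduction_general ψ R q G hG
end
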